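/- arXiv:1905.04078 — 3 statements merged into one kernel-verified Lean document; each statement's English description precedes it below -/
import Mathlib

section
/- For A-bounded operators T and S on H, the set W_A(T,S) = {ξ ∈ ℂ : ∃{x_n}, ‖x_n‖_A = 1, lim ‖Tx_n‖_A = ‖T‖_A, lim ⟨Tx_n, Sx_n⟩_A = ξ} is convex. -/
noncomputable section

open Filter Topology

variable {H : Type*} [NormedAddCommGroup H] [InnerProductSpace ℂ H]

/-- The semi-inner product induced by `A`: `⟨x, y⟩_A = ⟨A x, y⟩`. -/
def innerA (A : H →L[ℂ] H) (x y : H) : ℂ := @inner ℂ _ _ (A x) y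

/-- The seminorm induced by `A`: `‖x‖_A = √⟨A x, x⟩`. -/
def normA (A : H →L[ℂ] H) (x : H) : ℝ := Real.sqrt (innerA A x x).re

/-- The operator seminorm induced by `A`. -/
def opNormA (A T : H →L[ℂ] H) : ℝ :=
  sSup {r : ℝ | ∃ x : H, normA A x = 1 ∧ r = normA A (T x)}

/-- `T` is `A`-bounded. -/
def ABounded (A T : H →L[ℂ] H) : Prop :=
  ∃ c > 0, ∀ x : H, normA A (T x) ≤ c * normA A x

/-- The set `W_A(T,S)`. -/
def WA (A T S : H →L[ℂ] H) : Set ℂ :=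
  {ξ : ℂ | ∃ x : ℕ → H, (∀ n, normA A (x n) = 1) ∧
    Tendsto (fun n => normA A (T (x n))) atTop (𝓝 (opNormA A T)) ∧
    Tendsto (fun n => innerA A (T (x n)) (S (x n))) atTop (𝓝 ξ)}

/-! Writing `A = R†R` turns `⟨x, y⟩_A` into `⟪R x, R y⟫`, and writing
`‖T‖_A² A - T†AT = D†D` turns the defect `‖T‖_A² ‖z‖_A² - ‖T z‖_A²` into `‖D z‖²`, the square of a
seminorm. Let `ξ ≠ η` be realised by `x_n` and `y_n`. Since `x ↦ ⟨T x, S x⟩_A` is Lipschitz on the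
`A`-unit sphere and invariant under unimodular scalars, for large `n` the vector `x_n` stays at
`A`-distance `≥ ε` from the circle `{-c y_n : |c| = 1}`. A Toeplitz–Hausdorff argument in
`span {x_n, y_n}` then gives `A`-unit vectors `z_n = α_n x_n + β_n y_n` with `|α_n|, |β_n| ≤ 4 / ε` and
`⟨T z_n, S z_n⟩_A = t ⟨T x_n, S x_n⟩_A + (1 - t) ⟨T y_n, S y_n⟩_A`. Finally
`‖D z_n‖ ≤ |α_n| ‖D x_n‖ + |β_n| ‖D y_n‖ → 0`, that is, `‖T z_n‖_A → ‖T‖_A`. -/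

open scoped InnerProductSpace ComplexConjugate

theorem Complex.exists_norm_eq_one_mul_add_conj_mul_eq_ofReal_mul (a b : ℂ) {d : ℂ} (hd : d ≠ 0) :
    ∃ c : ℂ, ‖c‖ = 1 ∧ ∃ m : ℝ, c * a + conj c * b = m * d := by
  set q := a / d - conj (b / d)
  set c := exp (↑(-arg q) * I) with hc
  have hcq : c * q = ‖q‖ := by
    conv_lhs => rw [← norm_mul_exp_arg_mul_I q]
    rw [mul_left_comm, hc, ← exp_add, ofReal_neg, neg_mul, neg_add_cancel, exp_zero, mul_one]
  set w := c * (a / d) + conj c * (b / d) with hwdef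
  have hw : w = w.re := by
    refine ext rfl ?_
    rw [ofReal_im]
    have : w = c * q + (conj c * (b / d) + conj (conj c * (b / d))) := by
      simp only [w, q, map_mul, conj_conj]
      ring
    rw [this, hcq, add_conj, add_im, ofReal_im, ofReal_im, add_zero]
  refine ⟨c, norm_exp_ofReal_mul_I _, w.re, ?_⟩
  rw [← hw, hwdef]
  field_simp

theorem div_four_le_norm_smul_add_smul {F : Type*} [SeminormedAddCommGroup F] [NormedSpace ℝ F]
    {a b : F} (ha : ‖a‖ = 1) (hb : ‖b‖ = 1) {ε : ℝ} (hab : ε ≤ ‖a + b‖) {s : ℝ} (hs₀ : 0 ≤ s)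
    (hs₁ : s ≤ 1) : ε / 4 ≤ ‖s • a + (1 - s) • b‖ := by
  set y := s • a + (1 - s) • b
  have hsa : ‖s • a‖ = s := by rw [norm_smul, ha, Real.norm_of_nonneg hs₀, mul_one]
  have hsb : ‖(1 - s) • b‖ = 1 - s := by
    rw [norm_smul, hb, Real.norm_of_nonneg (by linarith), mul_one]
  have h₁ : ‖s • a‖ ≤ ‖y‖ + ‖(1 - s) • b‖ := by simpa [y] using norm_sub_le y ((1 - s) • b)
  have h₂ : ‖(1 - s) • b‖ ≤ ‖y‖ + ‖s • a‖ := by simpa [y] using norm_sub_le y (s • a)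
  have h₃ : ‖a + b‖ ≤ 2 * ‖y‖ + |1 - 2 * s| * 2 := by
    have hsplit : a + b = (2 : ℝ) • y + (1 - 2 * s) • (a - b) := by
      simp only [y, smul_add, smul_sub, smul_smul]
      module
    calc ‖a + b‖ ≤ ‖(2 : ℝ) • y‖ + ‖(1 - 2 * s) • (a - b)‖ := hsplit ▸ norm_add_le _ _
      _ ≤ 2 * ‖y‖ + |1 - 2 * s| * 2 := by
        rw [norm_smul, norm_smul, Real.norm_two, Real.norm_eq_abs]
        gcongr
        exact (norm_sub_le a b).trans (by rw [ha, hb]; norm_num)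
  cases abs_cases (1 - 2 * s) <;> linarith

theorem exists_mem_Icc_sq_add_mul_eq_mul_norm_sq {F : Type*} [SeminormedAddCommGroup F]
    [NormedSpace ℝ F] {a b : F} (ha : ‖a‖ = 1) (hb : ‖b‖ = 1) (m : ℝ) {t : ℝ} (ht₀ : 0 ≤ t)
    (ht₁ : t ≤ 1) :
    ∃ s ∈ Set.Icc (0 : ℝ) 1, s ^ 2 + s * (1 - s) * m = t * ‖s • a + (1 - s) • b‖ ^ 2 := by
  have hcont : ContinuousOn (fun s : ℝ => s ^ 2 + s * (1 - s) * m - t * ‖s • a + (1 - s) • b‖ ^ 2)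
      (Set.Icc 0 1) := by fun_prop
  have hivt := intermediate_value_Icc zero_le_one hcont
  obtain ⟨s, hs, hzero⟩ := @hivt 0 ⟨by simpa [hb] using ht₀, by simpa [ha] using ht₁⟩
  exact ⟨s, hs, sub_eq_zero.mp hzero⟩

theorem tendsto_nhds_iff_tendsto_nhds_zero_of_sq_add_sq_eq {ι : Type*} {l : Filter ι}
    {a b : ι → ℝ} {M : ℝ} (hM : 0 ≤ M) (ha : ∀ i, 0 ≤ a i) (hb : ∀ i, 0 ≤ b i)
    (hab : ∀ i, a i ^ 2 + b i ^ 2 = M ^ 2) : Tendsto a l (𝓝 M) ↔ Tendsto b l (𝓝 0) := by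
  have hf : Continuous fun r : ℝ => √(M ^ 2 - r ^ 2) := by fun_prop
  have hsqrt : ∀ {r s : ℝ}, 0 ≤ s → r ^ 2 + s ^ 2 = M ^ 2 → √(M ^ 2 - r ^ 2) = s :=
    fun hs h => by rw [← h, add_sub_cancel_left, Real.sqrt_sq hs]
  constructor
  · intro h
    convert (hf.tendsto M).comp h using 2
    · exact funext fun i => (hsqrt (hb i) (hab i)).symm
    · simp
  · intro h
    convert (hf.tendsto 0).comp h using 2
    · exact funext fun i => (hsqrt (ha i) (by rw [add_comm, hab])).symm
    · simp [Real.sqrt_sq hM]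

section SemiInnerProduct

variable {V E : Type*} [AddCommGroup V] [Module ℂ V] [NormedAddCommGroup E] [InnerProductSpace ℂ E]

theorem inner_apply_smul_add_smul (P Q : V →ₗ[ℂ] E) (α β : ℂ) (x y : V) :
    ⟪P (α • x + β • y), Q (α • x + β • y)⟫_ℂ =
      conj α * α * ⟪P x, Q x⟫_ℂ + conj α * β * ⟪P x, Q y⟫_ℂ
        + conj β * α * ⟪P y, Q x⟫_ℂ + conj β * β * ⟪P y, Q y⟫_ℂ := by
  simp only [map_add, map_smul, inner_add_left, inner_add_right, inner_smul_left,
    inner_smul_right]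
  ring

theorem inner_apply_sub_mul_inner_apply_eq {R P Q : V →ₗ[ℂ] E} {u v : V} (hu : ‖R u‖ = 1)
    (hv : ‖R v‖ = 1) (c : ℂ) (p q : ℝ) :
    ⟪P ((p : ℂ) • u + (q * c) • v), Q ((p : ℂ) • u + (q * c) • v)⟫_ℂ
        - ⟪P v, Q v⟫_ℂ * ⟪R ((p : ℂ) • u + (q * c) • v), R ((p : ℂ) • u + (q * c) • v)⟫_ℂ
      = p ^ 2 * (⟪P u, Q u⟫_ℂ - ⟪P v, Q v⟫_ℂ)
        + p * q * (c * (⟪P u, Q v⟫_ℂ - ⟪P v, Q v⟫_ℂ * ⟪R u, R v⟫_ℂ)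
          + conj c * (⟪P v, Q u⟫_ℂ - ⟪P v, Q v⟫_ℂ * ⟪R v, R u⟫_ℂ)) := by
  rw [inner_apply_smul_add_smul, inner_apply_smul_add_smul, inner_self_eq_norm_sq_to_K,
    inner_self_eq_norm_sq_to_K, hu, hv, map_mul, Complex.conj_ofReal, Complex.conj_ofReal,
    RCLike.ofReal_one]
  ring

theorem exists_smul_add_smul_inner_apply_eq {R P Q : V →ₗ[ℂ] E} {u v : V} (hu : ‖R u‖ = 1)
    (hv : ‖R v‖ = 1) (hne : ⟪P u, Q u⟫_ℂ ≠ ⟪P v, Q v⟫_ℂ) {ε : ℝ} (hε : 0 < ε)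
    (hsep : ∀ c : ℂ, ‖c‖ = 1 → ε ≤ ‖R (u + c • v)‖) {t : ℝ} (ht₀ : 0 ≤ t) (ht₁ : t ≤ 1) :
    ∃ α β : ℂ, ‖α‖ ≤ 4 / ε ∧ ‖β‖ ≤ 4 / ε ∧ ‖R (α • u + β • v)‖ = 1 ∧
      ⟪P (α • u + β • v), Q (α • u + β • v)⟫_ℂ = t * ⟪P u, Q u⟫_ℂ + (1 - t) * ⟪P v, Q v⟫_ℂ := by
  -- The phase `c` makes the cross term real relative to `⟪P u, Q u⟫ - ⟪P v, Q v⟫`, so along real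
  -- combinations of `u` and `c • v` only a real parameter has to be matched (by the IVT).
  obtain ⟨c, hc, m, hm⟩ := Complex.exists_norm_eq_one_mul_add_conj_mul_eq_ofReal_mul
    (⟪P u, Q v⟫_ℂ - ⟪P v, Q v⟫_ℂ * ⟪R u, R v⟫_ℂ) (⟪P v, Q u⟫_ℂ - ⟪P v, Q v⟫_ℂ * ⟪R v, R u⟫_ℂ)
    (sub_ne_zero.mpr hne)
  have hb : ‖c • R v‖ = 1 := by rw [norm_smul, hc, hv, one_mul]
  have hR : ∀ p q : ℝ, R ((p : ℂ) • u + (q * c) • v) = p • R u + q • c • R v := fun p q => by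
    rw [map_add, map_smul, map_smul, mul_smul, Complex.coe_smul, Complex.coe_smul]
  obtain ⟨s, ⟨hs₀, hs₁⟩, hst⟩ := exists_mem_Icc_sq_add_mul_eq_mul_norm_sq hu hb m ht₀ ht₁
  set ρ := ‖s • R u + (1 - s) • c • R v‖
  have hρ : ε / 4 ≤ ρ :=
    div_four_le_norm_smul_add_smul hu hb (by simpa using hsep c hc) hs₀ hs₁
  have hρ₀ : 0 < ρ := by linarith
  have hρinv : ρ⁻¹ ≤ 4 / ε := by rw [inv_le_comm₀ hρ₀ (by positivity), inv_div]; exact hρ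
  have hz : ‖R (((s / ρ : ℝ) : ℂ) • u + (((1 - s) / ρ : ℝ) * c) • v)‖ = 1 := by
    rw [hR, div_eq_inv_mul, div_eq_inv_mul, mul_smul, mul_smul, ← smul_add, norm_smul,
      Real.norm_of_nonneg (inv_nonneg.mpr hρ₀.le), inv_mul_cancel₀ hρ₀.ne']
  refine ⟨(s / ρ : ℝ), ((1 - s) / ρ : ℝ) * c, ?_, ?_, hz, ?_⟩
  · rw [Complex.norm_real, Real.norm_of_nonneg (by positivity), div_eq_mul_inv]
    exact (mul_le_of_le_one_left (inv_nonneg.mpr hρ₀.le) hs₁).trans hρinv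
  · rw [norm_mul, hc, mul_one, Complex.norm_real, Real.norm_of_nonneg (by
      exact div_nonneg (by linarith) hρ₀.le), div_eq_mul_inv]
    exact (mul_le_of_le_one_left (inv_nonneg.mpr hρ₀.le) (by linarith)).trans hρinv
  · have hcoef : ((s / ρ : ℝ) : ℂ) ^ 2 + (s / ρ : ℝ) * ((1 - s) / ρ : ℝ) * m = t := by
      norm_cast
      field_simp
      linarith
    have key := inner_apply_sub_mul_inner_apply_eq (P := P) (Q := Q) hu hv c (s / ρ) ((1 - s) / ρ)
    rw [hm, inner_self_eq_norm_sq_to_K, hz, RCLike.ofReal_one] at key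
    linear_combination key + (⟪P u, Q u⟫_ℂ - ⟪P v, Q v⟫_ℂ) * hcoef

theorem norm_inner_apply_sub_inner_apply_le {R P Q : V →ₗ[ℂ] E} {cP cQ : ℝ}
    (hP : ∀ x, ‖P x‖ ≤ cP * ‖R x‖) (hQ : ∀ x, ‖Q x‖ ≤ cQ * ‖R x‖) (u w : V) :
    ‖⟪P u, Q u⟫_ℂ - ⟪P w, Q w⟫_ℂ‖ ≤ cP * cQ * ‖R (u - w)‖ * (‖R u‖ + ‖R w‖) := by
  have hsplit : ⟪P u, Q u⟫_ℂ - ⟪P w, Q w⟫_ℂ = ⟪P (u - w), Q u⟫_ℂ + ⟪P w, Q (u - w)⟫_ℂ := by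
    simp only [map_sub, inner_sub_left, inner_sub_right]
    ring
  have hbound : ∀ x y, ‖⟪P x, Q y⟫_ℂ‖ ≤ cP * ‖R x‖ * (cQ * ‖R y‖) := fun x y =>
    (norm_inner_le_norm _ _).trans
      (mul_le_mul (hP x) (hQ y) (norm_nonneg _) ((norm_nonneg _).trans (hP x)))
  calc ‖⟪P u, Q u⟫_ℂ - ⟪P w, Q w⟫_ℂ‖
      ≤ ‖⟪P (u - w), Q u⟫_ℂ‖ + ‖⟪P w, Q (u - w)⟫_ℂ‖ := hsplit ▸ norm_add_le _ _
    _ ≤ cP * ‖R (u - w)‖ * (cQ * ‖R u‖) + cP * ‖R w‖ * (cQ * ‖R (u - w)‖) :=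
        add_le_add (hbound _ _) (hbound _ _)
    _ = cP * cQ * ‖R (u - w)‖ * (‖R u‖ + ‖R w‖) := by ring

theorem exists_eventually_smul_add_smul_inner_apply_eq {R P Q : V →ₗ[ℂ] E} {cP cQ : ℝ}
    (hcP : 0 < cP) (hcQ : 0 < cQ) (hP : ∀ x, ‖P x‖ ≤ cP * ‖R x‖) (hQ : ∀ x, ‖Q x‖ ≤ cQ * ‖R x‖)
    {ι : Type*} {l : Filter ι} {x y : ι → V} (hx : ∀ i, ‖R (x i)‖ = 1) (hy : ∀ i, ‖R (y i)‖ = 1)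
    {ξ η : ℂ} (hξ : Tendsto (fun i => ⟪P (x i), Q (x i)⟫_ℂ) l (𝓝 ξ))
    (hη : Tendsto (fun i => ⟪P (y i), Q (y i)⟫_ℂ) l (𝓝 η)) (hne : ξ ≠ η) {t : ℝ} (ht₀ : 0 ≤ t)
    (ht₁ : t ≤ 1) :
    ∃ K : ℝ, ∀ᶠ i in l, ∃ α β : ℂ, ‖α‖ ≤ K ∧ ‖β‖ ≤ K ∧ ‖R (α • x i + β • y i)‖ = 1 ∧
      ⟪P (α • x i + β • y i), Q (α • x i + β • y i)⟫_ℂ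
        = t * ⟪P (x i), Q (x i)⟫_ℂ + (1 - t) * ⟪P (y i), Q (y i)⟫_ℂ := by
  have hδ : 0 < ‖ξ - η‖ := norm_pos_iff.mpr (sub_ne_zero.mpr hne)
  have hgap : ∀ᶠ i in l, ‖ξ - η‖ / 2 < ‖⟪P (x i), Q (x i)⟫_ℂ - ⟪P (y i), Q (y i)⟫_ℂ‖ :=
    (hξ.sub hη).norm.eventually (lt_mem_nhds (half_lt_self hδ))
  refine ⟨4 / (‖ξ - η‖ / (4 * (cP * cQ))), hgap.mono fun i hi =>
    exists_smul_add_smul_inner_apply_eq (hx i) (hy i) ?_ (by positivity) (fun c hc => ?_) ht₀ ht₁⟩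
  · intro h
    rw [h, sub_self, norm_zero] at hi
    linarith
  · have hPQ : ⟪P (-c • y i), Q (-c • y i)⟫_ℂ = ⟪P (y i), Q (y i)⟫_ℂ := by
      rw [map_smul, map_smul, inner_smul_left, inner_smul_right, ← mul_assoc, Complex.conj_mul',
        norm_neg, hc, Complex.ofReal_one, one_pow, one_mul]
    have hR : ‖R (-c • y i)‖ = 1 := by rw [map_smul, norm_smul, norm_neg, hc, hy i, one_mul]
    have hle := norm_inner_apply_sub_inner_apply_le hP hQ (x i) (-c • y i)
    rw [hPQ, hR, hx i, neg_smul, sub_neg_eq_add] at hle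
    rw [div_le_iff₀ (by positivity)]
    linarith

theorem tendsto_norm_apply_smul_add_smul {ι : Type*} {l : Filter ι} (D : V →ₗ[ℂ] E)
    {x y : ι → V} {α β : ι → ℂ} {K : ℝ} (hα : ∀ n, ‖α n‖ ≤ K) (hβ : ∀ n, ‖β n‖ ≤ K)
    (hx : Tendsto (fun n => ‖D (x n)‖) l (𝓝 0)) (hy : Tendsto (fun n => ‖D (y n)‖) l (𝓝 0)) :
    Tendsto (fun n => ‖D (α n • x n + β n • y n)‖) l (𝓝 0) := by
  have hbound : ∀ n, ‖D (α n • x n + β n • y n)‖ ≤ K * ‖D (x n)‖ + K * ‖D (y n)‖ := fun n => by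
    rw [map_add, map_smul, map_smul]
    refine (norm_add_le _ _).trans (add_le_add ?_ ?_) <;> rw [norm_smul] <;> gcongr
    exacts [hα n, hβ n]
  refine squeeze_zero (fun n => norm_nonneg _) hbound ?_
  simpa using (hx.const_mul K).add (hy.const_mul K)

end SemiInnerProduct

theorem ContinuousLinearMap.IsPositive.exists_inner_eq_inner [CompleteSpace H]
    {A : H →L[ℂ] H} (hA : A.IsPositive) : ∃ R : H →L[ℂ] H, ∀ x y, ⟪A x, y⟫_ℂ = ⟪R x, R y⟫_ℂ := by
  obtain ⟨R, rfl⟩ := CStarAlgebra.nonneg_iff_eq_star_mul_self.mp ((nonneg_iff_isPositive A).mpr hA)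
  exact ⟨R, fun x y => R.adjoint_inner_left y (R x)⟩

theorem exists_innerA_eq_inner_and_normA_eq_norm [CompleteSpace H] {A : H →L[ℂ] H}
    (hA : A.IsPositive) :
    ∃ R : H →L[ℂ] H, (∀ x y, innerA A x y = ⟪R x, R y⟫_ℂ) ∧ ∀ x, normA A x = ‖R x‖ := by
  obtain ⟨R, hR⟩ := hA.exists_inner_eq_inner
  refine ⟨R, hR, fun x => ?_⟩
  rw [normA, innerA, hR, inner_self_eq_norm_sq_to_K]
  norm_cast
  exact Real.sqrt_sq (norm_nonneg _)

lemma normA_nonneg (A : H →L[ℂ] H) (x : H) : 0 ≤ normA A x := Real.sqrt_nonneg _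

lemma normA_smul (A : H →L[ℂ] H) (c : ℂ) (x : H) : normA A (c • x) = ‖c‖ * normA A x := by
  have h : innerA A (c • x) (c • x) = ((‖c‖ ^ 2 : ℝ) : ℂ) * innerA A x x := by
    simp only [innerA, map_smul, inner_smul_left, inner_smul_right, ← mul_assoc,
      Complex.mul_conj', Complex.ofReal_pow]
  rw [normA, normA, h, Complex.re_ofReal_mul, Real.sqrt_mul (sq_nonneg _),
    Real.sqrt_sq (norm_nonneg c)]

lemma opNormA_nonneg (A T : H →L[ℂ] H) : 0 ≤ opNormA A T :=
  Real.sSup_nonneg fun _ ⟨_, _, hr⟩ => hr ▸ normA_nonneg _ _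

lemma normA_apply_le_opNormA_mul {A T : H →L[ℂ] H} (hT : ABounded A T) (x : H) :
    normA A (T x) ≤ opNormA A T * normA A x := by
  obtain ⟨c, -, hc⟩ := hT
  obtain hx | hx := (normA_nonneg A x).eq_or_lt
  · simpa [← hx] using hc x
  have hbdd : BddAbove {r : ℝ | ∃ x : H, normA A x = 1 ∧ r = normA A (T x)} :=
    ⟨c, fun _ ⟨y, hy, hr⟩ => hr ▸ by simpa [hy] using hc y⟩
  have hnorm : ‖((normA A x)⁻¹ : ℂ)‖ = (normA A x)⁻¹ := by
    rw [norm_inv, Complex.norm_real, Real.norm_of_nonneg hx.le]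
  have hunit : normA A (((normA A x)⁻¹ : ℂ) • x) = 1 := by
    rw [normA_smul, hnorm, inv_mul_cancel₀ hx.ne']
  have hle := le_csSup hbdd ⟨_, hunit, rfl⟩
  rw [map_smul, normA_smul, hnorm, inv_mul_le_iff₀ hx] at hle
  rwa [mul_comm] at hle

theorem exists_norm_sq_eq_sub_normA_sq [CompleteSpace H] {A T : H →L[ℂ] H} (hA : A.IsPositive)
    {M : ℝ} (hM : ∀ x, normA A (T x) ≤ M * normA A x) :
    ∃ D : H →L[ℂ] H, ∀ x, ‖D x‖ ^ 2 = M ^ 2 * normA A x ^ 2 - normA A (T x) ^ 2 := by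
  obtain ⟨R, hRinner, hRnorm⟩ := exists_innerA_eq_inner_and_normA_eq_norm hA
  set P : H →L[ℂ] H := ((M ^ 2 : ℝ) : ℂ) • A - T.adjoint ∘L A ∘L T
  have hP : ∀ x, ⟪P x, x⟫_ℂ = ((M ^ 2 * normA A x ^ 2 - normA A (T x) ^ 2 : ℝ) : ℂ) := by
    intro x
    have hA' : ∀ y, ⟪A y, y⟫_ℂ = ((normA A y ^ 2 : ℝ) : ℂ) := fun y => by
      rw [← innerA, hRinner, hRnorm, inner_self_eq_norm_sq_to_K]
      norm_cast
    simp [P, ContinuousLinearMap.adjoint_inner_left, hA']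
    ring
  have hPpos : P.IsPositive := by
    refine (ContinuousLinearMap.isPositive_iff_complex P).mpr fun x => ?_
    rw [hP, RCLike.re_to_complex, Complex.ofReal_re, sub_nonneg, ← mul_pow]
    exact ⟨rfl, pow_le_pow_left₀ (normA_nonneg _ _) (hM x) 2⟩
  obtain ⟨D, hD⟩ := hPpos.exists_inner_eq_inner
  refine ⟨D, fun x => ?_⟩
  rw [← Complex.ofReal_inj, ← hP, hD, inner_self_eq_norm_sq_to_K]
  norm_cast

theorem exists_tendsto_normA_apply_iff [CompleteSpace H] {A T : H →L[ℂ] H} (hA : A.IsPositive)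
    (hT : ABounded A T) : ∃ D : H →L[ℂ] H, ∀ {ι : Type*} {l : Filter ι} (z : ι → H),
      (∀ i, normA A (z i) = 1) → (Tendsto (fun i => normA A (T (z i))) l (𝓝 (opNormA A T)) ↔
        Tendsto (fun i => ‖D (z i)‖) l (𝓝 0)) := by
  obtain ⟨D, hD⟩ := exists_norm_sq_eq_sub_normA_sq hA (normA_apply_le_opNormA_mul hT)
  exact ⟨D, fun z hz => tendsto_nhds_iff_tendsto_nhds_zero_of_sq_add_sq_eq (opNormA_nonneg A T)
    (fun _ => normA_nonneg _ _) (fun _ => norm_nonneg _) (fun i => by rw [hD, hz]; ring)⟩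

theorem stmt6 [CompleteSpace H] (A T S : H →L[ℂ] H) (hA : A.IsPositive)
    (hT : ABounded A T) (hS : ABounded A S) : Convex ℝ (WA A T S) := by
  rintro ξ ⟨x, hx, hxT, hxB⟩ η ⟨y, hy, hyT, hyB⟩ a b ha hb hab
  obtain rfl : b = 1 - a := by linarith
  obtain rfl | hne := eq_or_ne ξ η
  · rw [Convex.combo_self hab]
    exact ⟨x, hx, hxT, hxB⟩
  obtain ⟨D, hD⟩ := exists_tendsto_normA_apply_iff hA hT
  rw [hD x hx] at hxT
  rw [hD y hy] at hyT
  obtain ⟨R, hRinner, hRnorm⟩ := exists_innerA_eq_inner_and_normA_eq_norm hA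
  obtain ⟨cT, hcT, hT⟩ := hT
  obtain ⟨cS, hcS, hS⟩ := hS
  simp only [hRnorm, hRinner] at hx hy hT hS hxB hyB
  obtain ⟨K, hK⟩ := exists_eventually_smul_add_smul_inner_apply_eq (R := (R : H →ₗ[ℂ] H))
    (P := ((R ∘L T : H →L[ℂ] H) : H →ₗ[ℂ] H)) (Q := ((R ∘L S : H →L[ℂ] H) : H →ₗ[ℂ] H))
    hcT hcS hT hS hx hy hxB hyB hne ha (sub_nonneg.mp hb)
  obtain ⟨N, hN⟩ := eventually_atTop.mp hK
  choose α β hα hβ hz hzB using fun n => hN (n + N) (Nat.le_add_left N n)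
  have hz' : ∀ n, normA A (α n • x (n + N) + β n • y (n + N)) = 1 :=
    fun n => (hRnorm _).trans (hz n)
  have hshift := tendsto_add_atTop_nat N
  refine ⟨fun n => α n • x (n + N) + β n • y (n + N), hz', ?_, ?_⟩
  · rw [hD _ hz']
    exact tendsto_norm_apply_smul_add_smul (D : H →ₗ[ℂ] H) hα hβ (hxT.comp hshift) (hyT.comp hshift)
  · simp only [hRinner]
    convert ((hxB.comp hshift).const_mul (a : ℂ)).add ((hyB.comp hshift).const_mul (1 - (a : ℂ)))
      using 2 with n
    · exact hzB n
    · simp [Complex.real_smul]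
end
end

section
/- Let T, S be A-bounded with m_A(S) > 0, where m_A(S) = inf{‖Sx‖_A : ‖x‖_A = 1}. Then there exists a unique ζ₀ ∈ ℂ such that ‖(T + ζ₀S) + γS‖_A² ≥ ‖T + ζ₀S‖_A² + |γ|² m_A(S)² for every γ ∈ ℂ. -/
noncomputable section

open Filter Topology

variable {H : Type*} [NormedAddCommGroup H] [InnerProductSpace ℂ H]

/-- The `A`-minimum modulus. -/
def mA (A S : H →L[ℂ] H) : ℝ :=
  sInf {r : ℝ | ∃ x : H, normA A x = 1 ∧ r = normA A (S x)}

/-!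
For `‖x‖_A = 1`, `ζ ↦ ‖(T + ζ S) x‖_A²` is a real quadratic in `ζ` whose leading part is
`‖S x‖_A² |ζ|² ≥ m_A(S)² |ζ|²`, so the supremum `ζ ↦ ‖T + ζ S‖_A²` is `2 m_A(S)²`-strongly convex on
`ℂ`. A strongly convex function that is bounded below on a finite-dimensional space attains its
minimum at some `ζ₀` and grows quadratically away from it; two points with this growth property
dominate each other, hence coincide.
-/

open Set

section StrongConvex
variable {E : Type*} [NormedAddCommGroup E] [NormedSpace ℝ E] {m : ℝ} {f : E → ℝ}

lemma UniformConvexOn.ciSup {ι : Type*} [Nonempty ι] {s : Set E} {φ : ℝ → ℝ} {f : ι → E → ℝ}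
    (hf : ∀ i, UniformConvexOn s φ (f i)) (hbdd : ∀ x ∈ s, BddAbove (range fun i ↦ f i x)) :
    UniformConvexOn s φ fun x ↦ ⨆ i, f i x := by
  refine ⟨(hf (Classical.arbitrary ι)).1, fun x hx y hy a b ha hb hab ↦ ciSup_le fun i ↦ ?_⟩
  refine ((hf i).2 hx hy ha hb hab).trans ?_
  gcongr
  · exact le_ciSup (hbdd x hx) i
  · exact le_ciSup (hbdd y hy) i

lemma StrongConvexOn.add_sq_le_of_forall_le (hf : StrongConvexOn univ m f) {x : E}
    (hx : ∀ y, f x ≤ f y) (v : E) : f x + m / 2 * ‖v‖ ^ 2 ≤ f (x + v) := by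
  -- compare strong convexity on the segment `[x, x + v]` with `f x ≤ f (x + t • v)`, then `t → 0`
  have key : ∀ t ∈ Ioo (0 : ℝ) 1, f x + (1 - t) * (m / 2 * ‖v‖ ^ 2) ≤ f (x + v) := by
    rintro t ⟨ht0, ht1⟩
    have h := hf.2 (mem_univ x) (mem_univ (x + v)) (sub_nonneg.2 ht1.le) ht0.le (sub_add_cancel 1 t)
    rw [show (1 - t) • x + t • (x + v) = x + t • v by module, sub_add_cancel_left, norm_neg,
      smul_eq_mul, smul_eq_mul] at h
    have := hx (x + t • v)
    refine le_of_mul_le_mul_left ?_ ht0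
    nlinarith
  have hlim : Tendsto (fun t : ℝ ↦ f x + (1 - t) * (m / 2 * ‖v‖ ^ 2)) (𝓝[>] 0)
      (𝓝 (f x + m / 2 * ‖v‖ ^ 2)) := by
    have h := ((by fun_prop : Continuous fun t : ℝ ↦ f x + (1 - t) * (m / 2 * ‖v‖ ^ 2)).tendsto
      0).mono_left (nhdsWithin_le_nhds (s := Ioi 0))
    rwa [sub_zero, one_mul] at h
  exact le_of_tendsto hlim (eventually_of_mem (Ioo_mem_nhdsGT one_pos) key)

lemma StrongConvexOn.tendsto_cocompact_atTop [ProperSpace E] (hf : StrongConvexOn univ m f)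
    (hm : 0 < m) (hbdd : BddBelow (range f)) : Tendsto f (cocompact E) atTop := by
  obtain ⟨L, hL⟩ := hbdd
  have hlow : ∀ y, 2 * L - f 0 + m / 4 * ‖y‖ ^ 2 ≤ f y := by
    intro y
    have h := hf.2 (mem_univ 0) (mem_univ y) (by norm_num : (0:ℝ) ≤ 1 / 2)
      (by norm_num : (0:ℝ) ≤ 1 / 2) (by norm_num)
    rw [smul_zero, zero_add, zero_sub, norm_neg, smul_eq_mul, smul_eq_mul] at h
    have := hL (mem_range_self ((1 / 2 : ℝ) • y))
    linarith
  refine tendsto_atTop_mono hlow (tendsto_atTop_add_const_left _ _ ?_)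
  exact ((tendsto_pow_atTop two_ne_zero).comp tendsto_norm_cocompact_atTop).const_mul_atTop
    (by positivity)

theorem StrongConvexOn.existsUnique_add_sq_le [FiniteDimensional ℝ E]
    (hf : StrongConvexOn univ m f) (hm : 0 < m) (hbdd : BddBelow (range f)) :
    ∃! x, ∀ v, f x + m / 2 * ‖v‖ ^ 2 ≤ f (x + v) := by
  have hcont : Continuous f :=
    continuousOn_univ.1 ((hf.convexOn fun r ↦ by positivity).continuousOn isOpen_univ)
  obtain ⟨x, hx⟩ := hcont.exists_forall_le (hf.tendsto_cocompact_atTop hm hbdd)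
  refine ⟨x, hf.add_sq_le_of_forall_le hx, fun y hy ↦ ?_⟩
  have h₁ := hy (x - y)
  have h₂ := hf.add_sq_le_of_forall_le hx (y - x)
  rw [add_sub_cancel] at h₁ h₂
  rw [norm_sub_rev] at h₁
  have : ‖y - x‖ ^ 2 ≤ 0 := by nlinarith
  simpa [sub_eq_zero] using this

end StrongConvex

section InnerProductSpace
variable {F : Type*} [NormedAddCommGroup F] [InnerProductSpace ℂ F]

lemma strongConvexOn_norm_add_smul_sq (u v : F) :
    StrongConvexOn univ (2 * ‖v‖ ^ 2) fun ζ : ℂ ↦ ‖u + ζ • v‖ ^ 2 := by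
  rw [strongConvexOn_iff_convex]
  -- subtracting the quadratic part leaves a real-affine function of `ζ`
  have hlin : ConvexOn ℝ univ fun ζ : ℂ ↦
      ((2 : ℝ) • (Complex.reLm ∘ₗ LinearMap.mulRight ℝ (inner ℂ u v))) ζ + ‖u‖ ^ 2 :=
    (LinearMap.convexOn _ convex_univ).add_const _
  refine hlin.congr fun ζ _ ↦ ?_
  rw [norm_add_sq (𝕜 := ℂ), inner_smul_right, norm_smul]
  simp only [LinearMap.smul_apply, LinearMap.comp_apply, LinearMap.mulRight_apply,
    Complex.reLm_coe, smul_eq_mul, RCLike.re_to_complex]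
  ring

lemma strongConvexOn_sq_iSup_norm_add_smul {ι : Type*} [Nonempty ι] {u v : ι → F} {m : ℝ}
    (hu : BddAbove (range fun i ↦ ‖u i‖)) (hv : BddAbove (range fun i ↦ ‖v i‖)) (hm : 0 ≤ m)
    (hmv : ∀ i, m ≤ ‖v i‖) :
    StrongConvexOn univ (2 * m ^ 2) fun ζ : ℂ ↦ (⨆ i, ‖u i + ζ • v i‖) ^ 2 := by
  simp_rw [Real.iSup_pow (fun i ↦ norm_nonneg _)]
  obtain ⟨a, ha⟩ := hu
  obtain ⟨b, hb⟩ := hv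
  refine UniformConvexOn.ciSup (fun i ↦ (strongConvexOn_norm_add_smul_sq _ _).mono ?_)
    fun ζ _ ↦ ⟨(a + ‖ζ‖ * b) ^ 2, ?_⟩
  · gcongr
    exact hmv i
  · rintro _ ⟨i, rfl⟩
    have hui : ‖u i‖ ≤ a := ha (mem_range_self i)
    have hvi : ‖v i‖ ≤ b := hb (mem_range_self i)
    calc ‖u i + ζ • v i‖ ^ 2 ≤ (‖u i‖ + ‖ζ‖ * ‖v i‖) ^ 2 := by
          gcongr; exact (norm_add_le _ _).trans_eq (by rw [norm_smul])
      _ ≤ (a + ‖ζ‖ * b) ^ 2 := by gcongr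

end InnerProductSpace

section Seminorm
variable {A : H →L[ℂ] H}

lemma exists_normA_eq_norm [CompleteSpace H] (hA : A.IsPositive) :
    ∃ B : H →L[ℂ] H, ∀ x, normA A x = ‖B x‖ := by
  -- `A = B† B`, so `⟨A x, x⟩ = ‖B x‖²`
  obtain ⟨B, rfl⟩ := CStarAlgebra.nonneg_iff_eq_star_mul_self.mp
    ((ContinuousLinearMap.nonneg_iff_isPositive A).mpr hA)
  refine ⟨B, fun x ↦ ?_⟩
  rw [normA, innerA, ContinuousLinearMap.star_eq_adjoint, mul_apply_eq_comp,
    ContinuousLinearMap.adjoint_inner_left, ← RCLike.re_to_complex, inner_self_eq_norm_sq,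
    Real.sqrt_sq (norm_nonneg _)]

lemma opNormA_eq_iSup (A T : H →L[ℂ] H) :
    opNormA A T = ⨆ x : {x // normA A x = 1}, normA A (T x) := by
  rw [opNormA, iSup]
  congr 1
  ext r
  simp [eq_comm]

lemma mA_le_normA (S : H →L[ℂ] H) {x : H} (hx : normA A x = 1) : mA A S ≤ normA A (S x) :=
  csInf_le ⟨0, by rintro _ ⟨y, -, rfl⟩; exact Real.sqrt_nonneg _⟩ ⟨x, hx, rfl⟩

lemma exists_normA_eq_one_of_mA_pos {S : H →L[ℂ] H} (hm : 0 < mA A S) : ∃ x, normA A x = 1 := by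
  by_contra! h
  have : {r : ℝ | ∃ x : H, normA A x = 1 ∧ r = normA A (S x)} = ∅ := by
    ext r; simp [h]
  simp [mA, this] at hm

lemma ABounded.bddAbove_normA {T : H →L[ℂ] H} (hT : ABounded A T) :
    BddAbove (range fun x : {x // normA A x = 1} ↦ normA A (T x)) := by
  obtain ⟨c, -, hc⟩ := hT
  refine ⟨c, ?_⟩
  rintro _ ⟨x, rfl⟩
  simpa [x.2] using hc x

end Seminorm

theorem stmt13 [CompleteSpace H] (A T S : H →L[ℂ] H) (hA : A.IsPositive)
    (hT : ABounded A T) (hS : ABounded A S) (hm : 0 < mA A S) :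
    ∃! ζ₀ : ℂ, ∀ γ : ℂ,
      opNormA A (T + ζ₀ • S) ^ 2 + ‖γ‖ ^ 2 * mA A S ^ 2 ≤
        opNormA A ((T + ζ₀ • S) + γ • S) ^ 2 := by
  obtain ⟨B, hB⟩ := exists_normA_eq_norm hA
  have : Nonempty {x // normA A x = 1} := nonempty_subtype.2 (exists_normA_eq_one_of_mA_pos hm)
  have hG : StrongConvexOn univ (2 * mA A S ^ 2) fun ζ : ℂ ↦ opNormA A (T + ζ • S) ^ 2 := by
    have := strongConvexOn_sq_iSup_norm_add_smul (u := fun x : {x // normA A x = 1} ↦ B (T x))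
      (v := fun x ↦ B (S x)) (by simpa only [hB] using hT.bddAbove_normA)
      (by simpa only [hB] using hS.bddAbove_normA) hm.le fun x ↦ hB (S x) ▸ mA_le_normA S x.2
    simpa [opNormA_eq_iSup, hB] using this
  have h := hG.existsUnique_add_sq_le (by positivity) ⟨0, by rintro _ ⟨ζ, rfl⟩; positivity⟩
  simp_rw [add_assoc T, ← add_smul, mul_comm (‖_‖ ^ 2)]
  simpa only [mul_div_cancel_left₀ _ (two_ne_zero (α := ℝ))] using h
end
end

section
/- For A-bounded operators T and S, inf_{γ∈ℂ} ‖T + γS‖_A = sup{|⟨Tx, y⟩_A| : ‖x‖_A = ‖y‖_A = 1 and ⟨Sx, y⟩_A = 0}. -/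
noncomputable section

open Filter Topology

variable {H : Type*} [NormedAddCommGroup H] [InnerProductSpace ℂ H]

/-!
Factor `A = R† R`: then `‖x‖_A = ‖R x‖`, and an `A`-bounded operator induces a bounded operator
on the range of `R`. So it suffices to prove the distance formula
`inf_γ ‖T + γ S‖ = sup {|⟪T x, y⟫| : ‖x‖ = ‖y‖ = 1, ⟪S x, y⟫ = 0}` for bounded operators between
inner product spaces. The inequality `≥` holds because `⟪T x, y⟫ = ⟪(T + γ S) x, y⟫`. For `≤`, the
sets of `γ` that work for a single vector are closed, and compact as soon as `S x ≠ 0`, so it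
suffices to treat finite-dimensional domains. There take `γ₀` minimising `‖T + γ S‖`. By
minimality and the Toeplitz–Hausdorff theorem, `0` lies in the numerical range of
`(u, w) ↦ ⟪(T + γ₀ S) u, S w⟫` on the subspace where `T + γ₀ S` attains its norm
(Bhatia–Šemrl). This gives a unit vector `x` with `‖(T + γ₀ S) x‖ = ‖T + γ₀ S‖` and
`(T + γ₀ S) x ⊥ S x`, and `y = (T + γ₀ S) x / ‖T + γ₀ S‖` attains `‖T + γ₀ S‖` in the supremum.
-/

open scoped InnerProductSpace ComplexConjugate

theorem exists_forall_norm_add_smul_le {𝕜 V : Type*} [NormedField 𝕜] [ProperSpace 𝕜]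
    [NormedAddCommGroup V] [NormedSpace 𝕜 V] (u v : V) :
    ∃ γ₀ : 𝕜, ∀ γ : 𝕜, ‖u + γ₀ • v‖ ≤ ‖u + γ • v‖ := by
  refine (show Continuous fun γ : 𝕜 => ‖u + γ • v‖ by fun_prop).exists_forall_le' 0 ?_
  rcases eq_or_ne v 0 with rfl | hv
  · simp
  have hv' : 0 < ‖v‖ := norm_pos_iff.2 hv
  filter_upwards [tendsto_norm_cocompact_atTop.eventually_ge_atTop (2 * ‖u‖ / ‖v‖)] with γ hγ
  have : 2 * ‖u‖ ≤ ‖γ‖ * ‖v‖ := (div_le_iff₀ hv').1 hγ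
  have := norm_sub_le (u + γ • v) u
  rw [add_sub_cancel_left, norm_smul] at this
  rw [zero_smul, add_zero]
  linarith

namespace ContinuousLinearMap

variable {𝕜 E F : Type*} [RCLike 𝕜] [NormedAddCommGroup E] [InnerProductSpace 𝕜 E]
  [NormedAddCommGroup F] [InnerProductSpace 𝕜 F]

theorem exists_norm_eq_one_norm_apply_eq_opNorm [FiniteDimensional 𝕜 F] [Nontrivial F]
    (f : F →L[𝕜] E) : ∃ x, ‖x‖ = 1 ∧ ‖f x‖ = ‖f‖ := by
  have := FiniteDimensional.proper_rclike 𝕜 F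
  have : NormedSpace ℝ F := NormedSpace.restrictScalars ℝ 𝕜 F
  obtain ⟨x, hx, h⟩ := (isCompact_sphere (0 : F) 1).exists_sSup_image_eq
    (NormedSpace.sphere_nonempty.2 zero_le_one)
    (by fun_prop : Continuous fun x => ‖f x‖).continuousOn
  exact ⟨x, mem_sphere_zero_iff_norm.1 hx, by rw [← h, f.sSup_sphere_eq_norm]⟩

open RCLike in
theorem inner_map_map_eq_of_norm_map_eq {f : F →L[𝕜] E} {x : F}
    (hx : ‖f x‖ = ‖f‖ * ‖x‖) (w : F) : ⟪f x, f w⟫_𝕜 = ((‖f‖ ^ 2 : ℝ) : 𝕜) * ⟪x, w⟫_𝕜 := by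
  set D := ((‖f‖ ^ 2 : ℝ) : 𝕜) * ⟪x, w⟫_𝕜 - ⟪f x, f w⟫_𝕜
  set c := ‖f‖ ^ 2 * ‖w‖ ^ 2 - ‖f w‖ ^ 2
  -- `x` is a zero, hence a minimum, of the nonnegative quadratic form `‖f‖² ‖v‖² - ‖f v‖²`
  have hquad : ∀ t : 𝕜, 0 ≤ 2 * re (t * D) + ‖t‖ ^ 2 * c := by
    intro t
    have h := f.le_opNorm (x + t • w)
    have h2 : ‖f (x + t • w)‖ ^ 2 ≤ ‖f‖ ^ 2 * ‖x + t • w‖ ^ 2 := by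
      rw [← mul_pow]; gcongr
    rw [map_add, map_smul, norm_add_sq (𝕜 := 𝕜), norm_add_sq (𝕜 := 𝕜), inner_smul_right,
      inner_smul_right, norm_smul, norm_smul, hx] at h2
    have : re (t * D) = ‖f‖ ^ 2 * re (t * ⟪x, w⟫_𝕜) - re (t * ⟪f x, f w⟫_𝕜) := by
      simp only [D, mul_sub, map_sub]
      rw [mul_left_comm, re_ofReal_mul]
    rw [this]
    nlinarith
  have hD : ∀ s : ℝ, 0 ≤ (‖D‖ ^ 2 * c) * (s * s) + 2 * ‖D‖ ^ 2 * s + 0 := by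
    intro s
    have h := hquad ((s : 𝕜) * conj D)
    rw [mul_assoc, RCLike.conj_mul, ← ofReal_pow, ← ofReal_mul, ofReal_re] at h
    rw [norm_mul, norm_conj, norm_ofReal, mul_pow, sq_abs] at h
    linarith
  have := discrim_le_zero hD
  rw [discrim] at this
  have : ‖D‖ ^ 2 = 0 := by nlinarith
  rw [pow_eq_zero_iff two_ne_zero, norm_eq_zero, sub_eq_zero] at this
  exact this.symm

theorem norm_map_add_eq {f : F →L[𝕜] E} {x y : F}
    (hx : ‖f x‖ = ‖f‖ * ‖x‖) (hy : ‖f y‖ = ‖f‖ * ‖y‖) :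
    ‖f (x + y)‖ = ‖f‖ * ‖x + y‖ := by
  have h : ‖f (x + y)‖ ^ 2 = (‖f‖ * ‖x + y‖) ^ 2 := by
    rw [map_add, mul_pow, norm_add_sq (𝕜 := 𝕜), norm_add_sq (𝕜 := 𝕜),
      f.inner_map_map_eq_of_norm_map_eq hx, RCLike.re_ofReal_mul, hx, hy]
    ring
  exact (pow_left_inj₀ (norm_nonneg _) (by positivity) two_ne_zero).1 h

def normAttainingSubspace (f : F →L[𝕜] E) : Submodule 𝕜 F where
  carrier := {x | ‖f x‖ = ‖f‖ * ‖x‖}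
  add_mem' := f.norm_map_add_eq
  zero_mem' := by simp
  smul_mem' c x (hx : ‖f x‖ = ‖f‖ * ‖x‖) := by
    simp only [Set.mem_ofPred_eq, map_smul, norm_smul, hx]
    ring

theorem mem_normAttainingSubspace {f : F →L[𝕜] E} {x : F} :
    x ∈ f.normAttainingSubspace ↔ ‖f x‖ = ‖f‖ * ‖x‖ :=
  Iff.rfl

end ContinuousLinearMap

section ToeplitzHausdorff

variable {E : Type*} [NormedAddCommGroup E] [InnerProductSpace ℂ E]

def numericalRange (B : E →ₗ⋆[ℂ] E →ₗ[ℂ] ℂ) : Set ℂ := (fun x => B x x) '' Metric.sphere 0 1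

theorem mem_numericalRange {B : E →ₗ⋆[ℂ] E →ₗ[ℂ] ℂ} {z : ℂ} :
    z ∈ numericalRange B ↔ ∃ x, ‖x‖ = 1 ∧ B x x = z := by
  simp [numericalRange]

theorem sesqForm_smul_add_smul (B : E →ₗ⋆[ℂ] E →ₗ[ℂ] ℂ) (c d : ℂ) (a b : E) :
    B (c • a + d • b) (c • a + d • b) =
      conj c * c * B a a + conj c * d * B a b + conj d * c * B b a + conj d * d * B b b := by
  simp only [map_add, map_smulₛₗ, LinearMap.add_apply, LinearMap.smul_apply, smul_eq_mul,
    RingHom.id_apply]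
  ring

theorem sesqForm_smul_smul (B : E →ₗ⋆[ℂ] E →ₗ[ℂ] ℂ) (c : ℂ) (x : E) :
    B (c • x) (c • x) = conj c * c * B x x := by
  simpa using sesqForm_smul_add_smul B c 0 x x

theorem ofReal_mem_numericalRange_of_mem_Icc (B : E →ₗ⋆[ℂ] E →ₗ[ℂ] ℂ) {a b : E}
    (ha : ‖a‖ = 1) (hb : ‖b‖ = 1) (haa : B a a = 0) (hbb : B b b = 1) {q : ℝ}
    (hq : q ∈ Set.Icc (0 : ℝ) 1) : (q : ℂ) ∈ numericalRange B := by
  -- rotating `b` by `ω` makes `B` real along the segment from `a` to `ω • b`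
  obtain ⟨ω, hω, hωD⟩ := Complex.exists_norm_eq_mul_self (B a b - conj (B b a))
  set κ : ℝ := ‖B a b - conj (B b a)‖ + 2 * (ω * conj (B b a)).re
  set v : ℝ → E := fun s => ((1 - s : ℝ) : ℂ) • a + ((s : ℂ) * ω) • b
  have hv : ∀ s : ℝ, B (v s) (v s) = (((1 - s) * s * κ + s ^ 2 : ℝ) : ℂ) := by
    intro s
    have hωω : conj ω * ω = 1 := by rw [Complex.conj_mul', hω]; simp
    have hre := Complex.add_conj (ω * conj (B b a))
    simp only [map_mul, Complex.conj_conj] at hre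
    push_cast at hre
    simp only [v, sesqForm_smul_add_smul, haa, hbb, map_mul, Complex.conj_ofReal, κ]
    push_cast
    linear_combination (s - 1) * s * hωD + (1 - s) * s * hre + s ^ 2 * hωω
  have hv0 : ∀ s, v s ≠ 0 := by
    intro s hs
    rcases eq_or_ne s 1 with rfl | hs1
    · rw [← norm_eq_zero] at hs
      simp [v, norm_smul, hω, hb] at hs
    -- otherwise `a` would be a multiple of `b`, but `B a a = 0` while `B b b = 1`
    set c : ℂ := -(((1 - s : ℝ) : ℂ)⁻¹ * (s * ω))
    have h1s : ((1 - s : ℝ) : ℂ) ≠ 0 := by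
      rw [Complex.ofReal_ne_zero, sub_ne_zero]; exact hs1.symm
    have hab : a = c • b := by
      rw [← inv_smul_smul₀ h1s a, eq_neg_of_add_eq_zero_left hs, smul_neg, smul_smul, neg_smul]
    rw [hab, sesqForm_smul_smul, hbb, mul_one, Complex.conj_mul', sq_eq_zero_iff,
      Complex.ofReal_eq_zero, norm_eq_zero] at haa
    rw [hab, haa, zero_smul, norm_zero] at ha
    exact zero_ne_one ha
  set φ : ℝ → ℝ := fun s => ((1 - s) * s * κ + s ^ 2) / ‖v s‖ ^ 2
  have hφ : Continuous φ := by
    refine Continuous.div (by fun_prop) (by fun_prop) fun s => by simpa using hv0 s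
  obtain ⟨s, -, hs⟩ : ∃ s ∈ Set.Icc (0 : ℝ) 1, φ s = q :=
    intermediate_value_Icc zero_le_one hφ.continuousOn (by simpa [φ, v, norm_smul, hω, ha, hb])
  refine mem_numericalRange.2 ⟨(‖v s‖⁻¹ : ℂ) • v s, ?_, ?_⟩
  · simp [norm_smul, hv0 s]
  · rw [sesqForm_smul_smul, hv, ← hs]
    simp only [φ, map_inv₀, Complex.conj_ofReal]
    push_cast
    field_simp

/-- The **Toeplitz–Hausdorff theorem**. -/
theorem convex_numericalRange (B : E →ₗ⋆[ℂ] E →ₗ[ℂ] ℂ) : Convex ℝ (numericalRange B) := by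
  rintro _ ⟨a, ha, rfl⟩ _ ⟨b, hb, rfl⟩ p q hp hq hpq
  rw [mem_sphere_zero_iff_norm] at ha hb
  dsimp only
  rcases eq_or_ne (B a a) (B b b) with hab | hab
  · rw [← hab, ← add_smul, hpq, one_smul]
    exact ⟨a, mem_sphere_zero_iff_norm.2 ha, rfl⟩
  -- an affine change of `B` moves the endpoints to `0` and `1`
  set B' := (B b b - B a a)⁻¹ • (B - B a a • innerₛₗ ℂ)
  have hB' : ∀ x : E, ‖x‖ = 1 → B' x x = (B b b - B a a)⁻¹ * (B x x - B a a) := by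
    intro x hx
    simp [B', inner_self_eq_norm_sq_to_K, hx]
  have hab' : B b b - B a a ≠ 0 := sub_ne_zero.2 hab.symm
  obtain ⟨w, hw, hw'⟩ := mem_numericalRange.1 <| ofReal_mem_numericalRange_of_mem_Icc B' ha hb
    (by rw [hB' a ha, sub_self, mul_zero]) (by rw [hB' b hb, inv_mul_cancel₀ hab'])
    ⟨hq, by linarith⟩
  refine mem_numericalRange.2 ⟨w, hw, ?_⟩
  rw [hB' w hw, inv_mul_eq_iff_eq_mul₀ hab'] at hw'
  obtain rfl : p = 1 - q := by linarith
  rw [Complex.real_smul, Complex.real_smul]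
  push_cast
  linear_combination hw'

end ToeplitzHausdorff

section DistanceFormula

variable {E F : Type*} [NormedAddCommGroup E] [InnerProductSpace ℂ E]
  [NormedAddCommGroup F] [InnerProductSpace ℂ F]

theorem ContinuousLinearMap.norm_add_smul_apply_sq (T S : F →L[ℂ] E) (μ : ℂ) (x : F) :
    ‖(T + μ • S) x‖ ^ 2 = ‖T x‖ ^ 2 + 2 * (μ * ⟪T x, S x⟫_ℂ).re + ‖μ‖ ^ 2 * ‖S x‖ ^ 2 := by
  rw [add_apply, smul_apply, norm_add_sq (𝕜 := ℂ), inner_smul_right, norm_smul, mul_pow]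
  rfl

theorem ContinuousLinearMap.nonneg_of_norm_le_norm_add_smul_apply (T S : F →L[ℂ] E) {x : F}
    (hx : ‖x‖ = 1) {t : ℝ} (ht : 0 < t) (θ : ℂ) (h : ‖T‖ ≤ ‖(T + ((t : ℂ) * θ) • S) x‖) :
    0 ≤ 2 * (θ * ⟪T x, S x⟫_ℂ).re + t * ‖θ‖ ^ 2 * ‖S x‖ ^ 2 := by
  have h1 : ‖T x‖ ≤ ‖T‖ := by simpa [hx] using T.le_opNorm x
  have h2 : ‖T‖ ^ 2 ≤ ‖(T + ((t : ℂ) * θ) • S) x‖ ^ 2 := by gcongr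
  rw [T.norm_add_smul_apply_sq, mul_assoc, Complex.re_ofReal_mul, norm_mul,
    Complex.norm_real, Real.norm_of_nonneg ht.le] at h2
  have h3 : 0 ≤ t * (2 * (θ * ⟪T x, S x⟫_ℂ).re + t * ‖θ‖ ^ 2 * ‖S x‖ ^ 2) := by
    nlinarith [pow_le_pow_left₀ (norm_nonneg _) h1 2]
  exact nonneg_of_mul_nonneg_right (by linarith) ht

variable {T S : F →L[ℂ] E}

theorem exists_norm_apply_eq_and_re_mul_inner_nonneg [FiniteDimensional ℂ F] [Nontrivial F]
    (hT : ∀ μ : ℂ, ‖T‖ ≤ ‖T + μ • S‖) (θ : ℂ) :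
    ∃ x, ‖x‖ = 1 ∧ ‖T x‖ = ‖T‖ ∧ 0 ≤ (θ * ⟪T x, S x⟫_ℂ).re := by
  have := FiniteDimensional.proper_rclike ℂ F
  -- test the minimality of `T` in the direction `θ`, with step sizes `t n → 0`
  set t : ℕ → ℝ := fun n => 1 / ((n : ℝ) + 1)
  have ht : ∀ n, 0 < t n := fun n => by positivity
  choose x hx1 hx using fun n => (T + ((t n : ℂ) * θ) • S).exists_norm_eq_one_norm_apply_eq_opNorm
  have hslope : ∀ n, 0 ≤ 2 * (θ * ⟪T (x n), S (x n)⟫_ℂ).re + t n * ‖θ‖ ^ 2 * ‖S (x n)‖ ^ 2 :=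
    fun n => T.nonneg_of_norm_le_norm_add_smul_apply S (hx1 n) (ht n) θ (by rw [hx n]; exact hT _)
  obtain ⟨x₀, hx₀, φ, hφ, hlim⟩ := (isCompact_sphere (0 : F) 1).tendsto_subseq
    (fun n => mem_sphere_zero_iff_norm.2 (hx1 n))
  rw [mem_sphere_zero_iff_norm] at hx₀
  have htlim : Tendsto (fun n => (t (φ n), x (φ n))) atTop (𝓝 (0, x₀)) :=
    (tendsto_one_div_add_atTop_nhds_zero_nat.comp hφ.tendsto_atTop).prodMk_nhds hlim
  refine ⟨x₀, hx₀, le_antisymm (by simpa [hx₀] using T.le_opNorm x₀) ?_, ?_⟩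
  · have hc : Continuous fun p : ℝ × F => ‖(T + ((p.1 : ℂ) * θ) • S) p.2‖ := by
      simp only [add_apply, smul_apply]
      fun_prop
    have hlim : Tendsto (fun n => ‖(T + ((t (φ n) : ℂ) * θ) • S) (x (φ n))‖) atTop
        (𝓝 ‖T x₀‖) := by
      simpa [Function.comp_def] using (hc.tendsto (0, x₀)).comp htlim
    exact ge_of_tendsto' hlim fun n => (hx (φ n)).symm ▸ hT _
  · have hc : Continuous fun p : ℝ × F =>
        2 * (θ * ⟪T p.2, S p.2⟫_ℂ).re + p.1 * ‖θ‖ ^ 2 * ‖S p.2‖ ^ 2 := by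
      fun_prop
    have := ge_of_tendsto' ((hc.tendsto (0, x₀)).comp htlim) fun n => hslope (φ n)
    simp only [zero_mul, add_zero] at this
    linarith

/-- The **Bhatia–Šemrl theorem**, for a finite-dimensional domain. -/
theorem exists_norm_apply_eq_and_inner_eq_zero [FiniteDimensional ℂ F] [Nontrivial F]
    (hT : ∀ μ : ℂ, ‖T‖ ≤ ‖T + μ • S‖) :
    ∃ x, ‖x‖ = 1 ∧ ‖T x‖ = ‖T‖ ∧ ⟪T x, S x⟫_ℂ = 0 := by
  set K := T.normAttainingSubspace
  have := FiniteDimensional.proper_rclike ℂ K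
  set B : K →ₗ⋆[ℂ] K →ₗ[ℂ] ℂ :=
    ((innerₛₗ ℂ).comp ((T : F →ₗ[ℂ] E) ∘ₗ K.subtype)).compl₂ ((S : F →ₗ[ℂ] E) ∘ₗ K.subtype)
  have hB : ∀ x y, B x y = ⟪T x, S y⟫_ℂ := fun x y => rfl
  have hclosed : IsClosed (numericalRange B) :=
    ((isCompact_sphere 0 1).image (by simp only [hB]; fun_prop)).isClosed
  -- `0` is in the numerical range: otherwise a real functional `Re (θ * ·)` separates them
  have h0 : (0 : ℂ) ∈ numericalRange B := by
    by_contra h0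
    obtain ⟨f, u, hfu, hu⟩ := geometric_hahn_banach_closed_point
      (convex_numericalRange B) hclosed h0
    set θ := conj ((InnerProductSpace.toDual ℝ ℂ).symm f)
    have hf : ∀ z, f z = (θ * z).re := fun z => by
      rw [← InnerProductSpace.toDual_symm_apply, Complex.inner, mul_comm]
    obtain ⟨x, hx1, hx, hθ⟩ := exists_norm_apply_eq_and_re_mul_inner_nonneg hT θ
    have hxK : x ∈ K := by rw [ContinuousLinearMap.mem_normAttainingSubspace, hx, hx1, mul_one]
    have := hfu _ (mem_numericalRange.2 ⟨⟨x, hxK⟩, hx1, rfl⟩)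
    rw [map_zero] at hu
    rw [hB, hf] at this
    linarith
  obtain ⟨⟨x, hxK⟩, hx1, hx⟩ := mem_numericalRange.1 h0
  rw [ContinuousLinearMap.mem_normAttainingSubspace] at hxK
  replace hx1 : ‖x‖ = 1 := hx1
  exact ⟨x, hx1, by rw [hxK, hx1, mul_one], hx⟩

theorem norm_inner_apply_le_norm_add_smul {x : F} {y : E} (hx : ‖x‖ = 1) (hy : ‖y‖ = 1)
    (h : ⟪S x, y⟫_ℂ = 0) (γ : ℂ) : ‖⟪T x, y⟫_ℂ‖ ≤ ‖T + γ • S‖ := by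
  have : ⟪T x, y⟫_ℂ = ⟪(T + γ • S) x, y⟫_ℂ := by
    rw [add_apply, smul_apply, inner_add_left, inner_smul_left, h, mul_zero, add_zero]
  rw [this]
  calc ‖⟪(T + γ • S) x, y⟫_ℂ‖ ≤ ‖(T + γ • S) x‖ * ‖y‖ := norm_inner_le_norm _ _
    _ ≤ ‖T + γ • S‖ := by simpa [hy, hx] using (T + γ • S).le_opNorm x

section

variable {M : ℝ}
  (hM : ∀ x y, ‖x‖ = 1 → ‖y‖ = 1 → ⟪S x, y⟫_ℂ = 0 → ‖⟪T x, y⟫_ℂ‖ ≤ M)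
include hM

theorem norm_add_smul_apply_le_of_inner_eq_zero (hM0 : 0 ≤ M) {γ : ℂ} {x : F} (hx : ‖x‖ = 1)
    (h : ⟪(T + γ • S) x, S x⟫_ℂ = 0) : ‖(T + γ • S) x‖ ≤ M := by
  set R := T + γ • S
  rcases eq_or_ne (R x) 0 with h0 | h0
  · rwa [h0, norm_zero]
  set y := ((‖R x‖⁻¹ : ℝ) : ℂ) • R x
  have hy : ‖y‖ = 1 := by simp [y, norm_smul, h0]
  have hSy : ⟪S x, y⟫_ℂ = 0 := by
    rw [inner_smul_right, ← inner_conj_symm, h, map_zero, mul_zero]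
  have hTy : ⟪T x, y⟫_ℂ = ‖R x‖ := by
    have : T x = R x - γ • S x := by simp [R]
    rw [this, inner_sub_left, inner_smul_left, hSy, mul_zero, sub_zero, inner_smul_right,
      inner_self_eq_norm_sq_to_K, RCLike.ofReal_eq_complex_ofReal]
    have : (‖R x‖ : ℂ) ≠ 0 := by exact_mod_cast norm_ne_zero_iff.2 h0
    push_cast
    field_simp
  simpa [hTy] using hM x y hx hy hSy

theorem exists_norm_add_smul_le_of_finiteDimensional [FiniteDimensional ℂ F] (hM0 : 0 ≤ M) :
    ∃ γ : ℂ, ‖T + γ • S‖ ≤ M := by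
  obtain ⟨γ₀, hγ₀⟩ := exists_forall_norm_add_smul_le (𝕜 := ℂ) T S
  refine ⟨γ₀, ?_⟩
  cases subsingleton_or_nontrivial F
  · exact ContinuousLinearMap.opNorm_le_of_unit_norm hM0 fun x hx => by
      simp [Subsingleton.elim x 0] at hx
  obtain ⟨x, hx, hTx, hperp⟩ := exists_norm_apply_eq_and_inner_eq_zero (T := T + γ₀ • S) (S := S)
    fun μ => by rw [add_assoc, ← add_smul]; exact hγ₀ _
  rw [← hTx]
  exact norm_add_smul_apply_le_of_inner_eq_zero hM hM0 hx hperp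

theorem exists_norm_add_smul_le (hM0 : 0 ≤ M) : ∃ γ : ℂ, ‖T + γ • S‖ ≤ M := by
  by_cases hS : S = 0
  · exact ⟨0, ContinuousLinearMap.opNorm_le_of_unit_norm hM0 fun x hx =>
      norm_add_smul_apply_le_of_inner_eq_zero hM hM0 hx (by simp [hS])⟩
  obtain ⟨x₀, hx₀⟩ : ∃ x₀, S x₀ ≠ 0 := by
    by_contra! h
    exact hS (ContinuousLinearMap.ext h)
  set Γ : F → Set ℂ := fun x => {γ | ‖(T + γ • S) x‖ ≤ M * ‖x‖}
  have hclosed : ∀ x, IsClosed (Γ x) := fun x =>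
    isClosed_le (by simp only [add_apply, smul_apply]; fun_prop) continuous_const
  have hcompact : IsCompact (Γ x₀) := by
    refine (isCompact_closedBall 0 ((M * ‖x₀‖ + ‖T x₀‖) / ‖S x₀‖)).of_isClosed_subset
      (hclosed x₀) fun γ (hγ : ‖(T + γ • S) x₀‖ ≤ M * ‖x₀‖) => ?_
    rw [mem_closedBall_zero_iff, le_div_iff₀ (norm_pos_iff.2 hx₀), ← norm_smul]
    have := norm_sub_le ((T + γ • S) x₀) (T x₀)
    simp only [add_apply, smul_apply, add_sub_cancel_left] at this hγ
    linarith
  have hfin : ∀ u : Finset F, (Γ x₀ ∩ ⋂ x ∈ u, Γ x).Nonempty := by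
    intro u
    set W := Submodule.span ℂ (insert x₀ (u : Set F))
    have := FiniteDimensional.span_of_finite ℂ (u.finite_toSet.insert x₀)
    obtain ⟨γ, hγ⟩ := exists_norm_add_smul_le_of_finiteDimensional
      (T := T ∘L W.subtypeL) (S := S ∘L W.subtypeL) (fun x y hx hy h => hM x y hx hy h) hM0
    have hW : ∀ x ∈ W, γ ∈ Γ x := fun x hx =>
      ((T ∘L W.subtypeL + γ • S ∘L W.subtypeL).le_opNorm ⟨x, hx⟩).trans
        (mul_le_mul_of_nonneg_right hγ (norm_nonneg _))
    exact ⟨γ, hW x₀ (Submodule.subset_span (Set.mem_insert _ _)),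
      Set.mem_iInter₂.2 fun x hx => hW x (Submodule.subset_span (Set.mem_insert_of_mem _ hx))⟩
  obtain ⟨γ, -, hγ⟩ := hcompact.inter_iInter_nonempty Γ hclosed hfin
  exact ⟨γ, ContinuousLinearMap.opNorm_le_bound _ hM0 fun x => Set.mem_iInter.1 hγ x⟩

end

theorem iInf_norm_add_smul_eq_sSup (T S : F →L[ℂ] E) :
    ⨅ γ : ℂ, ‖T + γ • S‖ = sSup {r | ∃ x y, ‖x‖ = 1 ∧ ‖y‖ = 1 ∧ ⟪S x, y⟫_ℂ = 0 ∧
      r = ‖⟪T x, y⟫_ℂ‖} := by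
  set N := {r | ∃ x y, ‖x‖ = 1 ∧ ‖y‖ = 1 ∧ ⟪S x, y⟫_ℂ = 0 ∧ r = ‖⟪T x, y⟫_ℂ‖}
  have hle : ∀ γ : ℂ, ∀ r ∈ N, r ≤ ‖T + γ • S‖ := by
    rintro γ _ ⟨x, y, hx, hy, h, rfl⟩
    exact norm_inner_apply_le_norm_add_smul hx hy h γ
  have hM : ∀ x y, ‖x‖ = 1 → ‖y‖ = 1 → ⟪S x, y⟫_ℂ = 0 → ‖⟪T x, y⟫_ℂ‖ ≤ sSup N :=
    fun x y hx hy h => le_csSup ⟨_, hle 0⟩ ⟨x, y, hx, hy, h, rfl⟩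
  have hM0 : 0 ≤ sSup N := Real.sSup_nonneg (by rintro _ ⟨x, y, -, -, -, rfl⟩; positivity)
  obtain ⟨γ, hγ⟩ := exists_norm_add_smul_le hM hM0
  exact le_antisymm ((ciInf_le ⟨0, by rintro _ ⟨γ, rfl⟩; positivity⟩ γ).trans hγ)
    (le_ciInf fun γ => Real.sSup_le (hle γ) (norm_nonneg _))

end DistanceFormula

theorem Function.Surjective.exists_continuousLinearMap_comp_eq {R M G : Type*} [Ring R]
    [AddCommGroup M] [Module R M] [NormedAddCommGroup G] [Module R G] {P : M →ₗ[R] G}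
    (hP : Function.Surjective P) {T : M →ₗ[R] M} {c : ℝ} (hT : ∀ x, ‖P (T x)‖ ≤ c * ‖P x‖) :
    ∃ T' : G →L[R] G, ∀ x, T' (P x) = P (T x) := by
  have hker : LinearMap.ker P ≤ LinearMap.ker (P ∘ₗ T) := fun x (hx : P x = 0) => by
    simpa [hx] using hT x
  set T₀ := (LinearMap.ker P).liftQ (P ∘ₗ T) hker ∘ₗ
    (P.quotKerEquivOfSurjective hP).symm.toLinearMap
  have hT₀ : ∀ x, T₀ (P x) = P (T x) := fun x => by
    simp [T₀, P.quotKerEquivOfSurjective_symm_apply hP]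
  refine ⟨T₀.mkContinuous c fun g => ?_, hT₀⟩
  obtain ⟨x, rfl⟩ := hP g
  rw [hT₀]
  exact hT x

theorem ContinuousLinearMap.IsPositive.exists_innerA_eq [CompleteSpace H] {A : H →L[ℂ] H}
    (hA : A.IsPositive) : ∃ R : H →L[ℂ] H, ∀ x y, innerA A x y = ⟪R x, R y⟫_ℂ := by
  obtain ⟨R, rfl⟩ := CStarAlgebra.nonneg_iff_eq_star_mul_self.1 ((nonneg_iff_isPositive A).2 hA)
  exact ⟨R, fun x y => by
    rw [innerA, star_eq_adjoint, mul_apply_eq_comp, adjoint_inner_left]⟩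

section Transfer

variable {G : Type*} [NormedAddCommGroup G] [InnerProductSpace ℂ G] {A : H →L[ℂ] H}
  {P : H →ₗ[ℂ] G} (hP : ∀ x y, innerA A x y = ⟪P x, P y⟫_ℂ)
include hP

theorem normA_eq_norm (x : H) : normA A x = ‖P x‖ := by
  rw [normA, hP, norm_eq_sqrt_re_inner (𝕜 := ℂ), RCLike.re_to_complex]

variable (hPs : Function.Surjective P)
include hPs

theorem ABounded.exists_comp_eq {T : H →L[ℂ] H} (hT : ABounded A T) :
    ∃ T' : G →L[ℂ] G, ∀ x, T' (P x) = P (T x) := by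
  obtain ⟨c, -, hc⟩ := hT
  exact hPs.exists_continuousLinearMap_comp_eq (T := T) (c := c) fun x => by
    simpa only [normA_eq_norm hP, ContinuousLinearMap.coe_coe] using hc x

theorem opNormA_eq_norm {T : H →L[ℂ] H} {T' : G →L[ℂ] G} (hT' : ∀ x, T' (P x) = P (T x)) :
    opNormA A T = ‖T'‖ := by
  rw [opNormA, ← T'.sSup_sphere_eq_norm]
  congr 1
  ext r
  simp only [normA_eq_norm hP, ← hT', Set.mem_ofPred_eq, Set.mem_image, mem_sphere_zero_iff_norm,
    hPs.exists]
  exact exists_congr fun x => and_congr_right' eq_comm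

theorem setOf_norm_innerA_eq {T S : H →L[ℂ] H} {T' S' : G →L[ℂ] G}
    (hT' : ∀ x, T' (P x) = P (T x)) (hS' : ∀ x, S' (P x) = P (S x)) :
    {r : ℝ | ∃ x y : H, normA A x = 1 ∧ normA A y = 1 ∧
      innerA A (S x) y = 0 ∧ r = ‖innerA A (T x) y‖} =
    {r | ∃ u v, ‖u‖ = 1 ∧ ‖v‖ = 1 ∧ ⟪S' u, v⟫_ℂ = 0 ∧ r = ‖⟪T' u, v⟫_ℂ‖} := by
  ext r
  simp only [normA_eq_norm hP, hP, ← hT', ← hS', Set.mem_ofPred_eq, hPs.exists]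

end Transfer

theorem stmt14 [CompleteSpace H] (A T S : H →L[ℂ] H) (hA : A.IsPositive)
    (hT : ABounded A T) (hS : ABounded A S) :
    (⨅ γ : ℂ, opNormA A (T + γ • S)) =
    sSup {r : ℝ | ∃ x y : H, normA A x = 1 ∧ normA A y = 1 ∧
      innerA A (S x) y = 0 ∧ r = ‖innerA A (T x) y‖} := by
  obtain ⟨R, hR⟩ := hA.exists_innerA_eq
  set P := (R : H →ₗ[ℂ] H).rangeRestrict
  have hP : ∀ x y, innerA A x y = ⟪P x, P y⟫_ℂ := hR
  have hPs : Function.Surjective P := LinearMap.surjective_rangeRestrict _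
  obtain ⟨T', hT'⟩ := hT.exists_comp_eq hP hPs
  obtain ⟨S', hS'⟩ := hS.exists_comp_eq hP hPs
  have hTS' : ∀ γ : ℂ, ∀ x, (T' + γ • S') (P x) = P ((T + γ • S) x) := fun γ x => by
    simp [hT', hS']
  simp_rw [opNormA_eq_norm hP hPs (hTS' _), setOf_norm_innerA_eq hP hPs hT' hS']
  exact iInf_norm_add_smul_eq_sSup T' S'
end
end
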